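/- Fix α, β ∈ (0,1), positive reals a, b, μ, θ ∈ (π/2, π/(1+α)), and a nonnegative integer m. There exists a constant C > 0 such that for every real λ > 0 and every t > 0, the contour integral F_{m,λ}(t) (defined in the context) is well defined (all three integrals converge absolutely) and satisfies |F_{m,λ}(t)| ≤ C · t^{−m}. -/

import Mathlib

/-!
On `Σ_θ = {z ≠ 0 : |arg z| ≤ θ}` the symbol `g` takes values in the sector
`|arg w| ≤ γ := (1 + α) θ < π`: for `arg z ≥ 0`, multiplying the numerator of `g` by the
conjugate of its denominator gives four terms of arguments between `0` and `(1 + α) arg z`.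
For such `w` and `λ ≥ 0` one has `|w + λ|² ≥ (1 + cos γ) |w|²`, hence
`|h_λ(z)| ≤ M / |z|` with `M = (1 + cos γ)^{-1/2}` independent of `λ`.
On the rays `|e^{zt}| = e^{-c t |z|}` with `c = -cos θ > 0`, and
`∫_{1/t}^∞ ρ^m e^{-ctρ} M t dρ ≤ M m! c^{-m-1} t^{-m}`; on the arc `|z| = 1/t` the integrand
is bounded by `e M t^{1-m}`.
-/

open MeasureTheory intervalIntegral

/-- The symbol `g(z) = (z + a z^{1+α}) / (μ (1 + b z^β))` of the fractional
Oldroyd-B problem. Powers are principal complex powers. -/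
noncomputable def oldroydSymbol (a b μ α β : ℝ) (z : ℂ) : ℂ :=
  (z + (a : ℂ) * z ^ ((1 + α : ℝ) : ℂ)) / ((μ : ℂ) * (1 + (b : ℂ) * z ^ ((β : ℝ) : ℂ)))

/-- `h_λ(z) = g(z) / (z (g(z) + λ))`, the eigenvalue-wise symbol of the
Laplace-transformed solution operator `Ê(z)`. -/
noncomputable def oldroydKernel (a b μ α β lam : ℝ) (z : ℂ) : ℂ :=
  oldroydSymbol a b μ α β z / (z * (oldroydSymbol a b μ α β z + (lam : ℂ)))

/-- Integrand on the ray `{ρ e^{iθ'} : ρ ≥ 1/t}` of the contour `Γ_{θ,1/t}`. -/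
noncomputable def rayIntegrand (a b μ α β lam : ℝ) (m : ℕ) (t θ' : ℝ) (ρ : ℝ) : ℂ :=
  ((ρ : ℂ) * Complex.exp ((θ' : ℂ) * Complex.I)) ^ m *
    Complex.exp ((t : ℂ) * (ρ : ℂ) * Complex.exp ((θ' : ℂ) * Complex.I)) *
    oldroydKernel a b μ α β lam ((ρ : ℂ) * Complex.exp ((θ' : ℂ) * Complex.I))

/-- Integrand on the arc `{(1/t) e^{iψ} : |ψ| ≤ θ}` of the contour `Γ_{θ,1/t}`. -/
noncomputable def arcIntegrand (a b μ α β lam : ℝ) (m : ℕ) (t : ℝ) (ψ : ℝ) : ℂ :=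
  Complex.exp ((ψ : ℂ) * Complex.I) *
    (((1 / t : ℝ) : ℂ) * Complex.exp ((ψ : ℂ) * Complex.I)) ^ m *
    Complex.exp (Complex.exp ((ψ : ℂ) * Complex.I)) *
    oldroydKernel a b μ α β lam (((1 / t : ℝ) : ℂ) * Complex.exp ((ψ : ℂ) * Complex.I))

/-- The contour integral
`F_{m,λ}(t) = (1/2πi) ∫_{Γ_{θ,1/t}} e^{zt} z^m h_λ(z) dz`,
written out over the two rays and the arc of `Γ_{θ,1/t}`. -/
noncomputable def contourF (a b μ α β lam θ : ℝ) (m : ℕ) (t : ℝ) : ℂ :=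
  (1 / (2 * (Real.pi : ℂ) * Complex.I)) *
    (Complex.exp ((θ : ℂ) * Complex.I) *
        (∫ ρ in Set.Ioi (1 / t), rayIntegrand a b μ α β lam m t θ ρ) -
      Complex.exp ((-θ : ℂ) * Complex.I) *
        (∫ ρ in Set.Ioi (1 / t), rayIntegrand a b μ α β lam m t (-θ) ρ) +
      (Complex.I / (t : ℂ)) * ∫ ψ in (-θ)..θ, arcIntegrand a b μ α β lam m t ψ)

open Complex ComplexConjugate Set
open scoped Real

/-- The closed convex cone `{r e^{iφ} : r ≥ 0, 0 ≤ φ ≤ γ}`, for `0 < γ < π`. -/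
def upperCone (γ : ℝ) : Set ℂ :=
  {w | 0 ≤ w.im ∧ w.im * Real.cos γ ≤ w.re * Real.sin γ}

lemma add_mem_upperCone {γ : ℝ} {v w : ℂ} (hv : v ∈ upperCone γ) (hw : w ∈ upperCone γ) :
    v + w ∈ upperCone γ := by
  obtain ⟨hv₁, hv₂⟩ := hv
  obtain ⟨hw₁, hw₂⟩ := hw
  simp only [upperCone, mem_ofPred_eq, add_im, add_re]
  constructor <;> nlinarith

lemma ofReal_mul_mem_upperCone {γ r : ℝ} {w : ℂ} (hr : 0 ≤ r) (hw : w ∈ upperCone γ) :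
    (r : ℂ) * w ∈ upperCone γ := by
  obtain ⟨hw₁, hw₂⟩ := hw
  simp only [upperCone, mem_ofPred_eq, re_ofReal_mul, im_ofReal_mul]
  exact ⟨mul_nonneg hr hw₁, by nlinarith⟩

lemma ofReal_mul_exp_mem_upperCone {γ r φ : ℝ} (hγ : γ ≤ π) (hr : 0 ≤ r) (hφ : φ ∈ Icc 0 γ) :
    (r : ℂ) * exp (φ * I) ∈ upperCone γ := by
  have hsin : 0 ≤ Real.sin φ := Real.sin_nonneg_of_nonneg_of_le_pi hφ.1 (hφ.2.trans hγ)
  have hsin_sub : Real.sin (φ - γ) ≤ 0 :=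
    Real.sin_nonpos_of_nonpos_of_neg_pi_le (by linarith [hφ.2]) (by linarith [hφ.1])
  rw [Real.sin_sub] at hsin_sub
  simp only [upperCone, mem_ofPred_eq, re_ofReal_mul, im_ofReal_mul, exp_ofReal_mul_I_re,
    exp_ofReal_mul_I_im]
  exact ⟨mul_nonneg hr hsin, by nlinarith⟩

lemma cos_mul_norm_le_re_of_mem_upperCone {γ : ℝ} (hγ₁ : π / 2 ≤ γ) (hγ₂ : γ < π) {w : ℂ}
    (hw : w ∈ upperCone γ) : Real.cos γ * ‖w‖ ≤ w.re := by
  obtain ⟨him, hcone⟩ := hw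
  have hsin : 0 < Real.sin γ := Real.sin_pos_of_pos_of_lt_pi (by linarith [Real.pi_pos]) hγ₂
  have hcos : Real.cos γ ≤ 0 := Real.cos_nonpos_of_pi_div_two_le_of_le hγ₁ (by linarith)
  have hnorm : ‖w‖ ^ 2 = w.re ^ 2 + w.im ^ 2 := by
    rw [Complex.sq_norm, normSq_apply]; ring
  rcases le_or_gt 0 w.re with hre | hre
  · nlinarith [norm_nonneg w]
  · -- compare squares of the nonnegative numbers `-re w` and `-cos γ ‖w‖`
    have hsq : w.re ^ 2 * Real.sin γ ^ 2 ≤ w.im ^ 2 * Real.cos γ ^ 2 := by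
      nlinarith [mul_neg_of_neg_of_pos hre hsin]
    have : w.re ^ 2 ≤ (Real.cos γ * ‖w‖) ^ 2 := by
      nlinarith [Real.sin_sq_add_cos_sq γ]
    nlinarith [norm_nonneg w, mul_nonpos_of_nonpos_of_nonneg hcos (norm_nonneg w)]

lemma one_add_mul_sq_norm_le_sq_norm_add_ofReal {K : ℝ} (hK₁ : -1 ≤ K) (hK₂ : K ≤ 0) {u : ℂ}
    (hu : K * ‖u‖ ≤ u.re) {lam : ℝ} (hlam : 0 ≤ lam) :
    (1 + K) * ‖u‖ ^ 2 ≤ ‖u + lam‖ ^ 2 := by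
  have hexpand : ‖u + lam‖ ^ 2 = ‖u‖ ^ 2 + 2 * lam * u.re + lam ^ 2 := by
    simp only [Complex.sq_norm, normSq_add, normSq_ofReal, conj_ofReal, mul_re, ofReal_re,
      ofReal_im]
    ring
  rw [hexpand]
  nlinarith [mul_le_mul_of_nonneg_left hu hlam, mul_nonpos_of_nonpos_of_nonneg hK₂
    (sq_nonneg (‖u‖ - lam))]

lemma add_ofReal_ne_zero_of_mul_norm_le_re {K : ℝ} (hK : -1 < K) {u : ℂ}
    (hu : K * ‖u‖ ≤ u.re) {lam : ℝ} (hlam : 0 < lam) : u + lam ≠ 0 := by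
  intro h
  rw [eq_neg_of_add_eq_zero_left h, norm_neg, norm_real, Real.norm_of_nonneg hlam.le, neg_re,
    ofReal_re] at hu
  nlinarith

lemma norm_div_mul_add_ofReal_le {K : ℝ} (hK₁ : -1 < K) (hK₂ : K ≤ 0) {u : ℂ}
    (hu : K * ‖u‖ ≤ u.re) {lam : ℝ} (hlam : 0 ≤ lam) (z : ℂ) :
    ‖u / (z * (u + lam))‖ ≤ (√(1 + K))⁻¹ / ‖z‖ := by
  have hs : 0 < √(1 + K) := Real.sqrt_pos.mpr (by linarith)
  have hsq := one_add_mul_sq_norm_le_sq_norm_add_ofReal hK₁.le hK₂ hu hlam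
  have hroot : √(1 + K) * ‖u‖ ≤ ‖u + lam‖ := by
    rw [← pow_le_pow_iff_left₀ (by positivity) (norm_nonneg _) two_ne_zero, mul_pow,
      Real.sq_sqrt (by linarith)]
    exact hsq
  rw [norm_div, norm_mul, mul_comm, ← div_div]
  refine div_le_div_of_nonneg_right (div_le_of_le_mul₀ (norm_nonneg _) (by positivity) ?_)
    (norm_nonneg z)
  rw [inv_mul_eq_div, le_div_iff₀ hs]
  linarith

lemma neg_one_lt_cos_of_lt_pi {γ : ℝ} (h₀ : 0 ≤ γ) (h : γ < π) : -1 < Real.cos γ :=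
  Real.cos_pi ▸ Real.cos_lt_cos_of_nonneg_of_le_pi h₀ le_rfl h

lemma arg_ofReal_mul_exp {ρ ψ : ℝ} (hρ : 0 < ρ) (hψ : ψ ∈ Ioc (-π) π) :
    arg ((ρ : ℂ) * exp (ψ * I)) = ψ := by
  rw [arg_real_mul _ hρ, arg_exp_mul_I, toIocMod_eq_self]
  simpa [show -π + 2 * π = π by ring] using hψ

lemma cpow_ofReal_eq_of_ne_zero {z : ℂ} (hz : z ≠ 0) (c : ℝ) :
    z ^ (c : ℂ) = ((‖z‖ ^ c : ℝ) : ℂ) * exp ((c * arg z : ℝ) * I) := by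
  rw [cpow_def_of_ne_zero hz, Real.rpow_def_of_pos (norm_pos_iff.mpr hz), ofReal_exp,
    ← exp_add]
  congr 1
  apply Complex.ext <;> simp [log_re, log_im, mul_comm]

def sector (θ : ℝ) : Set ℂ := {z | z ≠ 0 ∧ |arg z| ≤ θ}

lemma ofReal_mul_exp_mem_sector {θ ρ ψ : ℝ} (hθ : θ < π) (hρ : 0 < ρ) (hψ : |ψ| ≤ θ) :
    (ρ : ℂ) * exp (ψ * I) ∈ sector θ := by
  obtain ⟨hψ₁, hψ₂⟩ := abs_le.mp hψ
  refine ⟨mul_ne_zero (ofReal_ne_zero.mpr hρ.ne') (exp_ne_zero _), ?_⟩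
  rwa [arg_ofReal_mul_exp hρ ⟨by linarith, by linarith⟩]

lemma mem_slitPlane_of_mem_sector {θ : ℝ} (hθ : θ < π) {z : ℂ} (hz : z ∈ sector θ) :
    z ∈ slitPlane :=
  mem_slitPlane_iff_arg.mpr ⟨fun h => by linarith [le_abs_self (arg z), hz.2], hz.1⟩

lemma cpow_ofReal_mem_sector {θ c : ℝ} (hc : 0 < c) (hcθ : c * θ < π) {z : ℂ}
    (hz : z ∈ sector θ) : z ^ (c : ℂ) ∈ sector (c * θ) := by
  rw [cpow_ofReal_eq_of_ne_zero hz.1]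
  refine ofReal_mul_exp_mem_sector hcθ (Real.rpow_pos_of_pos (norm_pos_iff.mpr hz.1) c) ?_
  rw [abs_mul, abs_of_pos hc]
  exact mul_le_mul_of_nonneg_left hz.2 hc.le

lemma one_add_ofReal_mul_ne_zero {b : ℝ} (hb : 0 ≤ b) {w : ℂ} (hw : w ∈ slitPlane) :
    1 + (b : ℂ) * w ≠ 0 := by
  intro h
  have hre : 1 + b * w.re = 0 := by simpa using congrArg re h
  have him : b * w.im = 0 := by simpa using congrArg im h
  rcases mem_slitPlane_iff.mp hw with hw | hw
  · nlinarith
  · have hb0 : b ≠ 0 := by rintro rfl; simp at hre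
    exact hw ((mul_eq_zero.mp him).resolve_left hb0)

lemma ofReal_mul_exp_mul_conj (r s φ χ : ℝ) :
    (r : ℂ) * exp (φ * I) * conj ((s : ℂ) * exp (χ * I)) =
      ((r * s : ℝ) : ℂ) * exp ((φ - χ : ℝ) * I) := by
  rw [map_mul, conj_ofReal, ← exp_conj, map_mul, conj_ofReal, conj_I]
  calc (r : ℂ) * exp (φ * I) * (s * exp (χ * -I))
      = (r * s : ℂ) * exp (φ * I + χ * -I) := by rw [exp_add]; ring
    _ = _ := by push_cast; ring_nf

/-- For `arg z ≥ 0`, the numerator of `g(z) = N / D` times `conj D` is a sum of four terms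
of arguments `arg z`, `(1 + α) arg z`, `(1 - β) arg z` and `(1 + α - β) arg z`. -/
lemma oldroydSymbol_mem_upperCone {a b μ α β γ : ℝ} (ha : 0 ≤ a) (hb : 0 ≤ b) (hμ : 0 ≤ μ)
    (hα : 0 ≤ α) (hβ₀ : 0 ≤ β) (hβ₁ : β ≤ 1) (hγ : γ ≤ π) {z : ℂ} (hz : z ≠ 0)
    (harg₀ : 0 ≤ arg z) (harg : (1 + α) * arg z ≤ γ) :
    oldroydSymbol a b μ α β z ∈ upperCone γ := by
  set ρ := ‖z‖
  set ψ := arg z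
  have hterm : ∀ r φ : ℝ, 0 ≤ r → 0 ≤ φ → φ ≤ (1 + α) * ψ →
      (r : ℂ) * exp (φ * I) ∈ upperCone γ := fun r φ hr hφ₀ hφ =>
    ofReal_mul_exp_mem_upperCone hγ hr ⟨hφ₀, hφ.trans harg⟩
  have hz_polar : z = (ρ : ℂ) * exp (ψ * I) := (norm_mul_exp_arg_mul_I z).symm
  have hexpand : (z + a * z ^ ((1 + α : ℝ) : ℂ)) * conj (μ * (1 + b * z ^ ((β : ℝ) : ℂ))) =
      μ * ((ρ : ℂ) * exp (ψ * I) + a * ((ρ ^ (1 + α) : ℝ) * exp (((1 + α) * ψ : ℝ) * I)) +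
        b * (((ρ * ρ ^ β : ℝ) : ℂ) * exp ((ψ - β * ψ : ℝ) * I)) +
        (a * b) * (((ρ ^ (1 + α) * ρ ^ β : ℝ) : ℂ) * exp (((1 + α) * ψ - β * ψ : ℝ) * I))) := by
    rw [← ofReal_mul_exp_mul_conj, ← ofReal_mul_exp_mul_conj, ← cpow_ofReal_eq_of_ne_zero hz,
      ← cpow_ofReal_eq_of_ne_zero hz, ← hz_polar]
    simp only [map_mul, map_add, map_one, conj_ofReal]
    ring
  rw [oldroydSymbol, div_eq_mul_inv, inv_def, ← mul_assoc, hexpand, mul_comm]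
  refine ofReal_mul_mem_upperCone (inv_nonneg.mpr (normSq_nonneg _))
    (ofReal_mul_mem_upperCone hμ ?_)
  have hρ : 0 ≤ ρ := norm_nonneg z
  refine add_mem_upperCone (add_mem_upperCone (add_mem_upperCone ?_ ?_) ?_) ?_
  · exact hterm ρ ψ hρ harg₀ (by nlinarith)
  · exact ofReal_mul_mem_upperCone ha (hterm _ _ (by positivity) (by positivity) le_rfl)
  · exact ofReal_mul_mem_upperCone hb (hterm _ _ (by positivity) (by nlinarith) (by nlinarith))
  · rw [← ofReal_mul]
    exact ofReal_mul_mem_upperCone (mul_nonneg ha hb)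
      (hterm _ _ (by positivity) (by nlinarith) (by nlinarith))

lemma oldroydSymbol_conj {a b μ α β : ℝ} {z : ℂ} (hz : arg z ≠ π) :
    oldroydSymbol a b μ α β (conj z) = conj (oldroydSymbol a b μ α β z) := by
  simp only [oldroydSymbol, conj_cpow _ _ hz, map_div₀, map_mul, map_add, conj_ofReal, map_one]

lemma cos_mul_norm_oldroydSymbol_le_re {a b μ α β θ : ℝ} (ha : 0 ≤ a) (hb : 0 ≤ b)
    (hμ : 0 ≤ μ) (hα : 0 ≤ α) (hβ₀ : 0 ≤ β) (hβ₁ : β ≤ 1) (hθ₁ : π / 2 ≤ (1 + α) * θ)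
    (hθ₂ : (1 + α) * θ < π) {z : ℂ} (hz : z ∈ sector θ) :
    Real.cos ((1 + α) * θ) * ‖oldroydSymbol a b μ α β z‖ ≤ (oldroydSymbol a b μ α β z).re := by
  have hupper : ∀ w ∈ sector θ, 0 ≤ arg w →
      Real.cos ((1 + α) * θ) * ‖oldroydSymbol a b μ α β w‖ ≤ (oldroydSymbol a b μ α β w).re :=
    fun w hw harg => cos_mul_norm_le_re_of_mem_upperCone hθ₁ hθ₂
      (oldroydSymbol_mem_upperCone ha hb hμ hα hβ₀ hβ₁ hθ₂.le hw.1 harg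
        (by nlinarith [le_abs_self (arg w), hw.2]))
  rcases le_or_gt 0 (arg z) with harg | harg
  · exact hupper z hz harg
  · -- reflect to the upper half plane, `g` commutes with conjugation
    have hπ : arg z ≠ π := by linarith [Real.pi_pos]
    have hconj := hupper (conj z)
      ⟨(map_ne_zero _).mpr hz.1, by rw [arg_conj, if_neg hπ, abs_neg]; exact hz.2⟩
      (by rw [arg_conj, if_neg hπ]; linarith)
    rwa [oldroydSymbol_conj hπ, norm_conj, conj_re] at hconj

lemma norm_oldroydKernel_le {a b μ α β θ lam : ℝ} (ha : 0 ≤ a) (hb : 0 ≤ b) (hμ : 0 ≤ μ)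
    (hα : 0 ≤ α) (hβ₀ : 0 ≤ β) (hβ₁ : β ≤ 1) (hθ₁ : π / 2 ≤ (1 + α) * θ)
    (hθ₂ : (1 + α) * θ < π) (hlam : 0 ≤ lam) {z : ℂ} (hz : z ∈ sector θ) :
    ‖oldroydKernel a b μ α β lam z‖ ≤ (√(1 + Real.cos ((1 + α) * θ)))⁻¹ / ‖z‖ :=
  norm_div_mul_add_ofReal_le (neg_one_lt_cos_of_lt_pi (by linarith [Real.pi_pos]) hθ₂)
    (Real.cos_nonpos_of_pi_div_two_le_of_le hθ₁ (by linarith))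
    (cos_mul_norm_oldroydSymbol_le_re ha hb hμ hα hβ₀ hβ₁ hθ₁ hθ₂ hz) hlam z

lemma continuousOn_oldroydKernel {a b μ α β θ lam : ℝ} (ha : 0 ≤ a) (hb : 0 ≤ b) (hμ : 0 < μ)
    (hα : 0 ≤ α) (hβ₀ : 0 < β) (hβ₁ : β ≤ 1) (hθ₁ : π / 2 ≤ (1 + α) * θ)
    (hθ₂ : (1 + α) * θ < π) (hlam : 0 < lam) :
    ContinuousOn (oldroydKernel a b μ α β lam) (sector θ) := by
  intro z hz
  have hθ₀ : 0 ≤ θ := (abs_nonneg _).trans hz.2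
  have hslit : z ∈ slitPlane := mem_slitPlane_of_mem_sector (by nlinarith) hz
  have hden : (μ : ℂ) * (1 + b * z ^ ((β : ℝ) : ℂ)) ≠ 0 :=
    mul_ne_zero (ofReal_ne_zero.mpr hμ.ne') (one_add_ofReal_mul_ne_zero hb
      (mem_slitPlane_of_mem_sector (by nlinarith) (cpow_ofReal_mem_sector hβ₀ (by nlinarith) hz)))
  have hg : ContinuousAt (oldroydSymbol a b μ α β) z :=
    (continuousAt_id.add (continuousAt_const.mul (continuousAt_cpow_const hslit))).div
      (continuousAt_const.mul (continuousAt_const.add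
        (continuousAt_const.mul (continuousAt_cpow_const hslit)))) hden
  have hg_add : oldroydSymbol a b μ α β z + lam ≠ 0 :=
    add_ofReal_ne_zero_of_mul_norm_le_re (neg_one_lt_cos_of_lt_pi (by positivity) hθ₂)
      (cos_mul_norm_oldroydSymbol_le_re ha hb hμ.le hα hβ₀.le hβ₁ hθ₁ hθ₂ hz) hlam
  exact (hg.div (continuousAt_id.mul (hg.add continuousAt_const))
    (mul_ne_zero hz.1 hg_add)).continuousWithinAt

lemma integrableOn_pow_mul_exp_neg_mul_Ioi (n : ℕ) {r : ℝ} (hr : 0 < r) :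
    IntegrableOn (fun x : ℝ => x ^ n * Real.exp (-(r * x))) (Ioi 0) := by
  refine (integrableOn_rpow_mul_exp_neg_mul_rpow (s := n) (by linarith [n.cast_nonneg (α := ℝ)])
    one_pos hr).congr_fun (fun x _ => ?_) measurableSet_Ioi
  simp [Real.rpow_natCast, neg_mul]

lemma integral_pow_mul_exp_neg_mul_Ioi (n : ℕ) {r : ℝ} (hr : 0 < r) :
    ∫ x in Ioi 0, x ^ n * Real.exp (-(r * x)) = n.factorial / r ^ (n + 1) := by
  have h := Real.integral_rpow_mul_exp_neg_mul_Ioi (a := n + 1) (by positivity) hr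
  rw [add_sub_cancel_right, Real.Gamma_nat_eq_factorial] at h
  simp only [Real.rpow_natCast] at h
  rw [h, ← Nat.cast_succ, Real.rpow_natCast, one_div, inv_pow, inv_mul_eq_div]

section ContourEstimates

variable {f : ℂ → ℂ} {θ M t : ℝ}

lemma nonneg_of_norm_le_div_norm (hθ : 0 ≤ θ) (hfM : ∀ z ∈ sector θ, ‖f z‖ ≤ M / ‖z‖) :
    0 ≤ M := by
  simpa using (norm_nonneg _).trans (hfM 1 ⟨one_ne_zero, by simpa using hθ⟩)

lemma norm_rayIntegrand_le (m : ℕ) (hfM : ∀ z ∈ sector θ, ‖f z‖ ≤ M / ‖z‖) (ht : 0 < t)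
    {θ' ρ : ℝ} (hθ : θ < π) (hθ' : |θ'| ≤ θ) (hρ : 1 / t < ρ) :
    ‖((ρ : ℂ) * exp (θ' * I)) ^ m * exp (t * ρ * exp (θ' * I)) * f (ρ * exp (θ' * I))‖ ≤
      M * t * (ρ ^ m * Real.exp (-(-Real.cos θ' * t * ρ))) := by
  have hρ₀ : 0 < ρ := lt_trans (by positivity) hρ
  have hz := ofReal_mul_exp_mem_sector hθ hρ₀ hθ'
  have hnorm_z : ‖(ρ : ℂ) * exp (θ' * I)‖ = ρ := by
    rw [norm_mul, norm_exp_ofReal_mul_I, norm_real, Real.norm_of_nonneg hρ₀.le, mul_one]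
  have hf : ‖f (ρ * exp (θ' * I))‖ ≤ M * t := by
    have h := hfM _ hz
    rw [hnorm_z] at h
    have hM := nonneg_of_norm_le_div_norm ((abs_nonneg _).trans hθ') hfM
    refine h.trans ?_
    rw [div_le_iff₀ hρ₀]
    have : 1 ≤ ρ * t := ((div_lt_iff₀ ht).mp hρ).le
    nlinarith
  have hexp : ‖exp (t * ρ * exp (θ' * I))‖ = Real.exp (-(-Real.cos θ' * t * ρ)) := by
    rw [norm_exp, ← ofReal_mul, re_ofReal_mul, exp_ofReal_mul_I_re]
    ring_nf
  rw [norm_mul, norm_mul, norm_pow, hnorm_z, hexp]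
  calc ρ ^ m * Real.exp (-(-Real.cos θ' * t * ρ)) * ‖f (ρ * exp (θ' * I))‖
      ≤ ρ ^ m * Real.exp (-(-Real.cos θ' * t * ρ)) * (M * t) := by gcongr
    _ = _ := by ring

lemma ray_estimate (m : ℕ) (hθ : θ < π) (hf : ContinuousOn f (sector θ))
    (hfM : ∀ z ∈ sector θ, ‖f z‖ ≤ M / ‖z‖) (ht : 0 < t) {θ' : ℝ} (hθ' : |θ'| ≤ θ)
    (hcos : Real.cos θ' < 0) :
    IntegrableOn (fun ρ : ℝ => ((ρ : ℂ) * exp (θ' * I)) ^ m * exp (t * ρ * exp (θ' * I)) *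
        f (ρ * exp (θ' * I))) (Ioi (1 / t)) ∧
      ‖∫ ρ in Ioi (1 / t), ((ρ : ℂ) * exp (θ' * I)) ^ m * exp (t * ρ * exp (θ' * I)) *
        f (ρ * exp (θ' * I))‖ ≤ M * m.factorial / (-Real.cos θ') ^ (m + 1) * (t ^ m)⁻¹ := by
  set c := -Real.cos θ'
  have hc : 0 < c := neg_pos.mpr hcos
  have hM := nonneg_of_norm_le_div_norm ((abs_nonneg _).trans hθ') hfM
  have hpt := fun ρ (hρ : ρ ∈ Ioi (1 / t)) => norm_rayIntegrand_le m hfM ht hθ hθ' hρ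
  have hdom : IntegrableOn (fun ρ : ℝ => M * t * (ρ ^ m * Real.exp (-(c * t * ρ)))) (Ioi 0) :=
    (integrableOn_pow_mul_exp_neg_mul_Ioi m (by positivity)).const_mul _
  have hsub : Ioi (1 / t) ⊆ Ioi 0 := Ioi_subset_Ioi (by positivity)
  have hmaps : MapsTo (fun ρ : ℝ => (ρ : ℂ) * exp (θ' * I)) (Ioi (1 / t)) (sector θ) :=
    fun ρ hρ => ofReal_mul_exp_mem_sector hθ (lt_trans (by positivity) hρ) hθ'
  have hcont : ContinuousOn (fun ρ : ℝ => ((ρ : ℂ) * exp (θ' * I)) ^ m *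
      exp (t * ρ * exp (θ' * I)) * f (ρ * exp (θ' * I))) (Ioi (1 / t)) :=
    (Continuous.continuousOn (by fun_prop)).mul (hf.comp (by fun_prop) hmaps)
  have hint := (hdom.mono_set hsub).mono' (hcont.aestronglyMeasurable measurableSet_Ioi)
    (ae_restrict_of_forall_mem measurableSet_Ioi hpt)
  refine ⟨hint, ?_⟩
  calc _ ≤ ∫ ρ in Ioi (1 / t), M * t * (ρ ^ m * Real.exp (-(c * t * ρ))) :=
        norm_integral_le_of_norm_le (hdom.mono_set hsub)
          (ae_restrict_of_forall_mem measurableSet_Ioi hpt)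
    _ ≤ ∫ ρ in Ioi 0, M * t * (ρ ^ m * Real.exp (-(c * t * ρ))) := by
        refine setIntegral_mono_set hdom ?_ hsub.eventuallyLE
        exact ae_restrict_of_forall_mem measurableSet_Ioi fun ρ hρ =>
          mul_nonneg (mul_nonneg hM ht.le) (mul_nonneg (pow_nonneg (le_of_lt hρ) m)
            (Real.exp_pos _).le)
    _ = M * m.factorial / c ^ (m + 1) * (t ^ m)⁻¹ := by
        rw [MeasureTheory.integral_const_mul, integral_pow_mul_exp_neg_mul_Ioi m (by positivity)]
        field_simp
        ring

lemma arc_estimate (m : ℕ) (hθ : θ < π) (hf : ContinuousOn f (sector θ))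
    (hfM : ∀ z ∈ sector θ, ‖f z‖ ≤ M / ‖z‖) (ht : 0 < t) (hθ₀ : 0 ≤ θ) :
    IntervalIntegrable (fun ψ : ℝ => exp (ψ * I) * (((1 / t : ℝ) : ℂ) * exp (ψ * I)) ^ m *
        exp (exp (ψ * I)) * f (((1 / t : ℝ) : ℂ) * exp (ψ * I))) volume (-θ) θ ∧
      ‖∫ ψ in (-θ)..θ, exp (ψ * I) * (((1 / t : ℝ) : ℂ) * exp (ψ * I)) ^ m *
        exp (exp (ψ * I)) * f (((1 / t : ℝ) : ℂ) * exp (ψ * I))‖ ≤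
        2 * θ * Real.exp 1 * M * t * (t ^ m)⁻¹ := by
  have hmem : ∀ ψ ∈ Icc (-θ) θ, ((1 / t : ℝ) : ℂ) * exp (ψ * I) ∈ sector θ :=
    fun ψ hψ => ofReal_mul_exp_mem_sector hθ (by positivity) (abs_le.mpr hψ)
  have hpt : ∀ ψ ∈ Icc (-θ) θ, ‖exp (ψ * I) * (((1 / t : ℝ) : ℂ) * exp (ψ * I)) ^ m *
      exp (exp (ψ * I)) * f (((1 / t : ℝ) : ℂ) * exp (ψ * I))‖ ≤
        Real.exp 1 * M * t * (t ^ m)⁻¹ := by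
    intro ψ hψ
    have hnorm_z : ‖((1 / t : ℝ) : ℂ) * exp (ψ * I)‖ = 1 / t := by
      rw [norm_mul, norm_exp_ofReal_mul_I, norm_real, Real.norm_of_nonneg (by positivity),
        mul_one]
    have hf := hfM _ (hmem ψ hψ)
    rw [hnorm_z, div_div_eq_mul_div, div_one] at hf
    rw [norm_mul, norm_mul, norm_mul, norm_pow, hnorm_z, norm_exp_ofReal_mul_I, norm_exp,
      exp_ofReal_mul_I_re, one_mul]
    calc (1 / t) ^ m * Real.exp (Real.cos ψ) * ‖f (((1 / t : ℝ) : ℂ) * exp (ψ * I))‖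
        ≤ (1 / t) ^ m * Real.exp 1 * (M * t) := by
          gcongr
          exact Real.cos_le_one ψ
      _ = _ := by ring
  have hIcc : uIcc (-θ) θ = Icc (-θ) θ := uIcc_of_le (by linarith)
  have hcont : ContinuousOn (fun ψ : ℝ => exp (ψ * I) * (((1 / t : ℝ) : ℂ) * exp (ψ * I)) ^ m *
      exp (exp (ψ * I)) * f (((1 / t : ℝ) : ℂ) * exp (ψ * I))) (uIcc (-θ) θ) := by
    rw [hIcc]
    exact (Continuous.continuousOn (by fun_prop)).mul (hf.comp (by fun_prop) hmem)
  refine ⟨hcont.intervalIntegrable, ?_⟩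
  calc _ ≤ Real.exp 1 * M * t * (t ^ m)⁻¹ * |θ - -θ| :=
        norm_integral_le_of_norm_le_const fun ψ hψ => hpt ψ (Ioc_subset_Icc_self
          (by rwa [uIoc_of_le (by linarith)] at hψ))
    _ = _ := by rw [sub_neg_eq_add, abs_of_nonneg (by linarith)]; ring

end ContourEstimates

lemma norm_contourF_le (a b μ α β lam θ : ℝ) (m : ℕ) {t : ℝ} (ht : 0 < t) :
    ‖contourF a b μ α β lam θ m t‖ ≤ (2 * π)⁻¹ *
      (‖∫ ρ in Ioi (1 / t), rayIntegrand a b μ α β lam m t θ ρ‖ +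
        ‖∫ ρ in Ioi (1 / t), rayIntegrand a b μ α β lam m t (-θ) ρ‖ +
        ‖∫ ψ in (-θ)..θ, arcIntegrand a b μ α β lam m t ψ‖ / t) := by
  have hprefactor : ‖1 / (2 * (π : ℂ) * I)‖ = (2 * π)⁻¹ := by
    simp [abs_of_pos Real.pi_pos]
  rw [contourF, norm_mul, hprefactor]
  gcongr
  refine (norm_add_le _ _).trans (add_le_add ((norm_sub_le _ _).trans (le_of_eq ?_)) (le_of_eq ?_))
  · rw [norm_mul, norm_mul, norm_exp_ofReal_mul_I, ← ofReal_neg, norm_exp_ofReal_mul_I,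
      one_mul, one_mul]
  · rw [norm_mul, norm_div, norm_I, norm_real, Real.norm_of_nonneg ht.le]
    ring

theorem contourF_bound_nu_zero (α β a b μ θ : ℝ)
    (hα : α ∈ Set.Ioo (0 : ℝ) 1) (hβ : β ∈ Set.Ioo (0 : ℝ) 1)
    (ha : 0 < a) (hb : 0 < b) (hμ : 0 < μ)
    (hθ : Real.pi / 2 < θ) (hθ' : θ < Real.pi / (1 + α)) (m : ℕ) :
    ∃ C > 0, ∀ lam > (0 : ℝ), ∀ t > (0 : ℝ),
      IntegrableOn (fun ρ => rayIntegrand a b μ α β lam m t θ ρ) (Set.Ioi (1 / t)) ∧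
      IntegrableOn (fun ρ => rayIntegrand a b μ α β lam m t (-θ) ρ) (Set.Ioi (1 / t)) ∧
      IntervalIntegrable (fun ψ => arcIntegrand a b μ α β lam m t ψ) volume (-θ) θ ∧
      ‖contourF a b μ α β lam θ m t‖ ≤ C * t ^ (-(m : ℝ)) := by
  have hθ₀ : 0 < θ := lt_trans (by positivity) hθ
  have hγ₂ : (1 + α) * θ < π := (lt_div_iff₀' (by linarith [hα.1])).mp hθ'
  have hγ₁ : π / 2 ≤ (1 + α) * θ := by nlinarith [hα.1]
  have hθπ : θ < π := by nlinarith [hα.1]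
  have hcos : Real.cos θ < 0 := Real.cos_neg_of_pi_div_two_lt_of_lt hθ (by linarith)
  set M := (√(1 + Real.cos ((1 + α) * θ)))⁻¹
  have hM : 0 < M := inv_pos.mpr (Real.sqrt_pos.mpr
    (by linarith [neg_one_lt_cos_of_lt_pi (by linarith) hγ₂]))
  refine ⟨(2 * π)⁻¹ * (2 * (M * m.factorial / (-Real.cos θ) ^ (m + 1)) +
    2 * θ * Real.exp 1 * M), by have := neg_pos.mpr hcos; positivity, fun lam hlam t ht => ?_⟩
  have hf := continuousOn_oldroydKernel ha.le hb.le hμ hα.1.le hβ.1 hβ.2.le hγ₁ hγ₂ hlam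
  have hfM := fun z (hz : z ∈ sector θ) =>
    norm_oldroydKernel_le ha.le hb.le hμ.le hα.1.le hβ.1.le hβ.2.le hγ₁ hγ₂ hlam.le hz
  obtain ⟨hint₁, hbound₁⟩ := ray_estimate m hθπ hf hfM ht (abs_of_pos hθ₀).le hcos
  obtain ⟨hint₂, hbound₂⟩ := ray_estimate m hθπ hf hfM ht (θ' := -θ)
    (by rw [abs_neg, abs_of_pos hθ₀]) (by rwa [Real.cos_neg])
  obtain ⟨hint₃, hbound₃⟩ := arc_estimate m hθπ hf hfM ht hθ₀.le
  rw [Real.cos_neg] at hbound₂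
  refine ⟨hint₁, hint₂, hint₃, (norm_contourF_le a b μ α β lam θ m ht).trans ?_⟩
  rw [Real.rpow_neg ht.le, Real.rpow_natCast]
  calc _ ≤ (2 * π)⁻¹ * (M * m.factorial / (-Real.cos θ) ^ (m + 1) * (t ^ m)⁻¹ +
        M * m.factorial / (-Real.cos θ) ^ (m + 1) * (t ^ m)⁻¹ +
        2 * θ * Real.exp 1 * M * t * (t ^ m)⁻¹ / t) := by
          gcongr ?_ * (?_ + ?_ + ?_ / _)
          exacts [hbound₁, hbound₂, hbound₃]
    _ = _ := by field_simp; ring
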